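/- arXiv:math/0604213 — 2 statements merged into one kernel-verified Lean document; each statement's English description precedes it below -/
import Mathlib

section
/- Let Y ⊆ X be a closed subscheme of a smooth variety X, P ∈ Y a point, and m, p ≥ 1. Then J_m Y ∩ T_P^{(m)}X is a linear subspace of the vector space T_P^{(m)}X, and ψ_{m,p}(J_m Y ∩ T_P^{(m)}X) = J_p Y ∩ T_P^{(p)}X. Concretely, in a formal coordinate system x at P in which Y is defined by power series f_α with linear parts ℓ_α, the subspace J_m Y ∩ T_P^{(m)}X is cut out in T_P^{(m)}X ≅ C^n (coordinates x^{(m)}) by the linear equations ℓ_α(x^{(m)}) = 0. -/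
open MvPolynomial Polynomial

noncomputable section

lemma coeff_aux {n : ℕ} (P v : Fin n → ℂ) (f : MvPolynomial (Fin n) ℂ) :
    (MvPolynomial.aeval (fun i => Polynomial.C (P i) + Polynomial.C (v i) * Polynomial.X) f).coeff 0
      = MvPolynomial.eval P f ∧
    (MvPolynomial.aeval (fun i => Polynomial.C (P i) + Polynomial.C (v i) * Polynomial.X) f).coeff 1
      = ∑ i, v i * MvPolynomial.eval P (MvPolynomial.pderiv i f) := by
  induction f using MvPolynomial.induction_on with
  | C a => simp
  | add p q hp hq =>
    refine ⟨?_, ?_⟩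
    · simp [hp.1, hq.1]
    · simp [hp.2, hq.2, mul_add, Finset.sum_add_distrib]
  | mul_X p i hp =>
    have e : (MvPolynomial.aeval
        (fun i => Polynomial.C (P i) + Polynomial.C (v i) * Polynomial.X) (p * MvPolynomial.X i))
        = (MvPolynomial.aeval (fun i => Polynomial.C (P i) + Polynomial.C (v i) * Polynomial.X) p)
            * Polynomial.C (P i)
          + ((MvPolynomial.aeval (fun i => Polynomial.C (P i) + Polynomial.C (v i) * Polynomial.X) p)
            * Polynomial.C (v i)) * Polynomial.X := by
      rw [map_mul, MvPolynomial.aeval_X]; ring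
    refine ⟨?_, ?_⟩
    · rw [e]; simp [hp.1]
    · rw [e]
      simp only [Polynomial.coeff_add, Polynomial.coeff_mul_C, Polynomial.coeff_mul_X, hp.1, hp.2,
        MvPolynomial.pderiv_mul, MvPolynomial.pderiv_X, map_add, MvPolynomial.eval_mul,
        MvPolynomial.eval_X]
      rw [eq_comm]
      have h1 : ∀ x : Fin n, MvPolynomial.eval P ((Pi.single x 1 : Fin n → MvPolynomial (Fin n) ℂ) i)
          = if i = x then 1 else 0 := by
        intro x; rw [Pi.single_apply]; split <;> simp
      simp only [h1, mul_ite, mul_one, mul_zero, mul_add, ← mul_assoc, Finset.sum_add_distrib,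
        Finset.sum_ite_eq, Finset.mem_univ, if_true, ← Finset.sum_mul]
      ring

/-- Lemma 3.1: identification of `J_m Y ∩ T_P^{(m)}X` inside the `m`-th order
tangent space, in local coordinates.  A vector `v ∈ T_P^{(m)}𝔸ⁿ ≅ ℂⁿ`
corresponds to the `m`-jet `t ↦ P + v·t^m`.  If `Y` is the closed subscheme cut
out by polynomials `f_α` vanishing at `P`, then this jet lies in `J_m Y` (i.e.
`f_α(P + v t^m) ≡ 0 mod t^{m+1}` for all `α`) if and only if `v` satisfies the
linear equations `ℓ_α(v) = 0`, where `ℓ_α(v) = ∑ᵢ ∂f_α/∂xᵢ(P)·vᵢ` is the linear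
part of `f_α` at `P`.  In particular `J_m Y ∩ T_P^{(m)}X` is a linear subspace
of `T_P^{(m)}X`, and since the right-hand side does not depend on `m`, the
isomorphisms `ψ_{m,p}` carry `J_m Y ∩ T_P^{(m)}X` onto `J_p Y ∩ T_P^{(p)}X`. -/
theorem jet_of_subscheme_inter_higher_tangent {n m : ℕ} (hm : 1 ≤ m)
    {ι : Type*} (P : Fin n → ℂ) (f : ι → MvPolynomial (Fin n) ℂ)
    (hP : ∀ α, MvPolynomial.eval P (f α) = 0) (v : Fin n → ℂ) :
    (∀ α, (Polynomial.X : Polynomial ℂ) ^ (m + 1) ∣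
        MvPolynomial.aeval
          (fun i => Polynomial.C (P i) + Polynomial.C (v i) * Polynomial.X ^ m)
          (f α)) ↔
      ∀ α, ∑ i, v i * MvPolynomial.eval P (MvPolynomial.pderiv i (f α)) = 0 := by
  refine forall_congr' fun α => ?_
  set F := MvPolynomial.aeval
      (fun i => Polynomial.C (P i) + Polynomial.C (v i) * Polynomial.X) (f α) with hF
  have hcomp : MvPolynomial.aeval
      (fun i => Polynomial.C (P i) + Polynomial.C (v i) * Polynomial.X ^ m) (f α)
      = F.comp (Polynomial.X ^ m) := by
    rw [Polynomial.comp_eq_aeval, hF, ← AlgHom.comp_apply]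
    exact (DFunLike.congr_fun (MvPolynomial.algHom_ext fun i => by simp) (f α)).symm
  rw [hcomp]
  obtain ⟨h0, h1⟩ := coeff_aux P v (f α)
  rw [hP α] at h0
  obtain ⟨G, hG⟩ : (Polynomial.X : Polynomial ℂ) ∣ F := Polynomial.X_dvd_iff.2 h0
  have hG0 : G.coeff 0 = ∑ i, v i * MvPolynomial.eval P (MvPolynomial.pderiv i (f α)) := by
    rw [← h1, ← hF, hG, Polynomial.coeff_X_mul]
  rw [hG, Polynomial.mul_comp, Polynomial.X_comp, pow_succ,
    mul_dvd_mul_iff_left (pow_ne_zero m Polynomial.X_ne_zero), Polynomial.X_dvd_iff,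
    Polynomial.coeff_zero_eq_eval_zero, Polynomial.eval_comp, Polynomial.eval_pow,
    Polynomial.eval_X, zero_pow (by omega), ← Polynomial.coeff_zero_eq_eval_zero, hG0]

end
end

section
/- Let Z ⊂ A^n be a closed subscheme whose projective closure Z̄ ⊂ P^n is a positive-dimensional complete intersection meeting the hyperplane at infinity H properly. Then the homogeneous limit Z^0 of Z (under the scaling action centered at a point O ∈ A^n) equals the affine cone with vertex O over Z̄ ∩ H, and Z^0 is a complete intersection subscheme of A^n. -/
open MvPolynomial

noncomputable section

/-- The initial form (top-degree homogeneous part) of a polynomial. -/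
def initialForm {n : ℕ} (f : MvPolynomial (Fin n) ℂ) : MvPolynomial (Fin n) ℂ :=
  MvPolynomial.homogeneousComponent f.totalDegree f

/-- The initial ideal: generated by top-degree parts of the nonzero elements. -/
def initialIdeal {n : ℕ} (I : Ideal (MvPolynomial (Fin n) ℂ)) :
    Ideal (MvPolynomial (Fin n) ℂ) :=
  Ideal.span { g | ∃ f ∈ I, f ≠ 0 ∧ g = initialForm f }

/-!
Write `gⱼ` for the top-degree form of `fⱼ` and `F = ∑ aⱼ fⱼ` with `deg aⱼ + deg fⱼ ≤ D`, and let
`bⱼ` be the part of `aⱼ` of degree `D - deg fⱼ`. The degree-`D` part of `F` is `∑ bⱼ gⱼ`, so it lies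
in `(g)` if `deg F = D`. Otherwise `b` is a syzygy of the regular sequence `g`, hence a combination
of Koszul syzygies: `bⱼ = ∑ᵢ hᵢⱼ gᵢ` with `h` alternating and homogeneous. Replacing `aⱼ` by
`aⱼ - ∑ᵢ hᵢⱼ fᵢ` keeps `F` (as `∑ᵢⱼ hᵢⱼ fᵢ fⱼ = 0`) and lowers `D`, so descending induction on `D`
puts the top form of `F` in `(g)`.
-/

theorem Finset.sum_sum_mul_mul_eq_zero_of_alternating {ι R : Type*} [Fintype ι] [CommRing R]
    {h : ι → ι → R} (hanti : ∀ i j, h i j = -h j i) (hdiag : ∀ i, h i i = 0) (x : ι → R) :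
    ∑ i, ∑ j, h i j * x i * x j = 0 := by
  rw [← Finset.sum_product']
  refine Finset.sum_involution (fun p _ => p.swap) (fun p _ => ?_) (fun p _ hp hswap => ?_)
    (fun _ _ => Finset.mem_univ _) (fun p _ => p.swap_swap)
  · rw [Prod.fst_swap, Prod.snd_swap, hanti p.1 p.2]
    ring
  · obtain ⟨i, j⟩ := p
    obtain rfl : j = i := congrArg Prod.fst hswap
    simp [hdiag] at hp

namespace MvPolynomial

variable {σ R : Type*} [CommRing R]

theorem eq_zero_or_totalDegree_lt_of_homogeneousComponent_eq_zero
    {p : MvPolynomial σ R} {m : ℕ} (hp : p.totalDegree ≤ m) (hm : homogeneousComponent m p = 0) :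
    p = 0 ∨ p.totalDegree < m := by
  rcases Nat.eq_zero_or_pos m with rfl | hm0
  · left
    rwa [← homogeneousComponent_eq_self (isHomogeneous_of_totalDegree_zero σ (Nat.le_zero.mp hp))]
  right
  rw [totalDegree, Finset.sup_lt_iff hm0]
  intro s hs
  have hsm : s.degree ≠ m := fun hsm => by
    have := congrArg (coeff s) hm
    rw [coeff_homogeneousComponent, if_pos hsm, coeff_zero] at this
    exact mem_support_iff.mp hs this
  exact lt_of_le_of_ne ((le_totalDegree hs).trans hp) hsm

theorem homogeneousComponent_mul_of_isHomogeneous {g : MvPolynomial σ R} {d : ℕ}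
    (hg : g.IsHomogeneous d) (p : MvPolynomial σ R) (m : ℕ) :
    homogeneousComponent m (p * g) = if d ≤ m then homogeneousComponent (m - d) p * g else 0 := by
  have hterm : ∀ k, homogeneousComponent m (homogeneousComponent k p * g) =
      if m = k + d then homogeneousComponent k p * g else 0 := fun k =>
    homogeneousComponent_of_mem ((homogeneousComponent_isHomogeneous k p).mul hg)
  conv_lhs => rw [← sum_homogeneousComponent p, Finset.sum_mul, map_sum]
  simp only [hterm]
  split_ifs with hdm
  · rw [Finset.sum_eq_single (m - d) (fun k _ hk => if_neg (by omega)) (fun hk => ?_),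
      if_pos (by omega)]
    rw [if_pos (by omega), homogeneousComponent_eq_zero _ _ (by simp at hk; omega), zero_mul]
  · exact Finset.sum_eq_zero fun k _ => if_neg (by omega)

theorem homogeneousComponent_mul_of_totalDegree_add_le {p q : MvPolynomial σ R}
    {m : ℕ} (hm : p.totalDegree + q.totalDegree ≤ m) :
    homogeneousComponent m (p * q) =
      homogeneousComponent (m - q.totalDegree) p * homogeneousComponent q.totalDegree q := by
  set d := q.totalDegree
  have hlower : homogeneousComponent m (p * (q - homogeneousComponent d q)) = 0 := by
    have hq : homogeneousComponent d (q - homogeneousComponent d q) = 0 := by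
      rw [map_sub, homogeneousComponent_eq_self (homogeneousComponent_isHomogeneous d q), sub_self]
    rcases eq_zero_or_totalDegree_lt_of_homogeneousComponent_eq_zero
      ((totalDegree_sub _ _).trans (max_le le_rfl
        (homogeneousComponent_isHomogeneous d q).totalDegree_le)) hq with h0 | hlt
    · rw [h0, mul_zero, map_zero]
    · exact homogeneousComponent_eq_zero _ _ ((totalDegree_mul _ _).trans_lt (by omega))
  rw [show p * q = p * homogeneousComponent d q + p * (q - homogeneousComponent d q) by ring,
    map_add, hlower, add_zero,
    homogeneousComponent_mul_of_isHomogeneous (homogeneousComponent_isHomogeneous d q),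
    if_pos (by omega)]

end MvPolynomial

theorem Ideal.ofList_ofFn {R : Type*} [CommSemiring R] {c : ℕ} (g : Fin c → R) :
    Ideal.ofList (List.ofFn g) = Ideal.span (Set.range g) := by
  simp only [Ideal.ofList, List.mem_ofFn']
  rfl

theorem RingTheory.Sequence.IsWeaklyRegular.exists_alternating_of_sum_mul_eq_zero
    {R : Type*} [CommRing R] :
    ∀ {c : ℕ} {g : Fin c → R}, IsWeaklyRegular R (List.ofFn g) →
    ∀ {b : Fin c → R}, ∑ j, b j * g j = 0 →
    ∃ h : Fin c → Fin c → R, (∀ i j, h i j = -h j i) ∧ (∀ i, h i i = 0) ∧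
      ∀ j, b j = ∑ i, h i j * g i
  | 0, _, _, _, _ => ⟨0, by simp, by simp, fun j => j.elim0⟩
  | c + 1, g, hreg, b, hb => by
    rw [List.ofFn_succ', List.concat_eq_append, isWeaklyRegular_append_iff,
      isWeaklyRegular_singleton_iff] at hreg
    obtain ⟨hreg', hlast⟩ := hreg
    rw [Ideal.ofList_ofFn] at hlast
    rw [Fin.sum_univ_castSucc] at hb
    set I := Ideal.span (Set.range fun i : Fin c => g i.castSucc)
    have hbI : b (Fin.last c) ∈ I := by
      have hmem : g (Fin.last c) • b (Fin.last c) ∈ I • (⊤ : Submodule R R) := by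
        rw [smul_eq_mul, Ideal.mul_top, smul_eq_mul, mul_comm, eq_neg_of_add_eq_zero_right hb]
        exact neg_mem (Ideal.sum_mem _ fun j _ =>
          Ideal.mul_mem_left _ _ (Ideal.subset_span ⟨j, rfl⟩))
      simpa only [smul_eq_mul, Ideal.mul_top] using
        mem_of_isSMulRegular_quotient_of_smul_mem hlast hmem
    obtain ⟨k, hk⟩ := Ideal.mem_span_range_iff_exists_fun.mp hbI
    obtain ⟨h, hanti, hdiag, hbh⟩ := exists_alternating_of_sum_mul_eq_zero hreg'
      (b := fun j => b j.castSucc + k j * g (Fin.last c)) (by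
        simp only [add_mul, Finset.sum_add_distrib, mul_right_comm _ (g (Fin.last c)),
          ← Finset.sum_mul, hk]
        linear_combination hb)
    -- border the matrix given by induction with the column `k` and the row `-k`
    refine ⟨fun i j => Fin.lastCases (Fin.lastCases 0 k i)
      (fun j' => Fin.lastCases (-k j') (fun i' => h i' j') i) j, fun i j => ?_, fun i => ?_,
      fun j => ?_⟩
    · induction j using Fin.lastCases <;> induction i using Fin.lastCases
      all_goals simp
      exact hanti _ _
    · induction i using Fin.lastCases <;> simp [hdiag]
    · induction j using Fin.lastCases with
      | last =>
        simp only [Fin.sum_univ_castSucc, Fin.lastCases_last, Fin.lastCases_castSucc]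
        rw [zero_mul, add_zero, hk]
      | cast j =>
        simp only [Fin.sum_univ_castSucc, Fin.lastCases_last, Fin.lastCases_castSucc]
        linear_combination hbh j

namespace MvPolynomial

variable {σ R : Type*} [CommRing R] {c : ℕ}

open RingTheory.Sequence

-- The vanishing conditions make the truncated degrees `D - d j`, `D - d i - d j` behave like
-- integer degrees, with negative degree meaning zero.
theorem exists_homogeneous_alternating_of_sum_mul_eq_zero {g b : Fin c → MvPolynomial σ R}
    {d : Fin c → ℕ} {D : ℕ} (hg : ∀ i, (g i).IsHomogeneous (d i))
    (hreg : IsWeaklyRegular (MvPolynomial σ R) (List.ofFn g))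
    (hb : ∀ j, (b j).IsHomogeneous (D - d j)) (hb0 : ∀ j, D < d j → b j = 0)
    (hsum : ∑ j, b j * g j = 0) :
    ∃ h : Fin c → Fin c → MvPolynomial σ R, (∀ i j, h i j = -h j i) ∧ (∀ i, h i i = 0) ∧
      (∀ i j, (h i j).IsHomogeneous (D - d i - d j)) ∧ (∀ i j, D < d i + d j → h i j = 0) ∧
      ∀ j, b j = ∑ i, h i j * g i := by
  obtain ⟨h, hanti, hdiag, hbh⟩ := hreg.exists_alternating_of_sum_mul_eq_zero hsum
  refine ⟨fun i j => if d i + d j ≤ D then homogeneousComponent (D - d i - d j) (h i j) else 0,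
    fun i j => ?_, fun i => by simp [hdiag], fun i j => ?_, fun i j hij => if_neg (by omega),
    fun j => ?_⟩
  · simp only [add_comm (d j), Nat.sub_right_comm D (d j), hanti i j, map_neg]
    split_ifs <;> simp
  · dsimp only
    split_ifs
    exacts [homogeneousComponent_isHomogeneous _ _, isHomogeneous_zero _ _ _]
  · by_cases hj : d j ≤ D
    · calc b j = homogeneousComponent (D - d j) (∑ i, h i j * g i) := by
            rw [← hbh j, homogeneousComponent_eq_self (hb j)]
        _ = _ := by
          rw [map_sum]
          refine Finset.sum_congr rfl fun i _ => ?_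
          rw [homogeneousComponent_mul_of_isHomogeneous (hg i), Nat.sub_right_comm D (d j)]
          dsimp only
          split_ifs <;> first | rfl | omega
    · dsimp only
      rw [hb0 j (by omega)]
      exact (Finset.sum_eq_zero fun i _ => by rw [if_neg (by omega), zero_mul]).symm

theorem totalDegree_sum_mul_le {f a : Fin c → MvPolynomial σ R} {D : ℕ}
    (ha : ∀ j, a j = 0 ∨ (a j).totalDegree + (f j).totalDegree ≤ D) :
    (∑ j, a j * f j).totalDegree ≤ D := by
  refine (totalDegree_finsetSum _ _).trans (Finset.sup_le fun j _ => ?_)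
  rcases ha j with h0 | h0
  · simp [h0]
  · exact (totalDegree_mul _ _).trans h0

theorem homogeneousComponent_sum_mul_of_totalDegree_add_le {f a : Fin c → MvPolynomial σ R}
    {D : ℕ} (ha : ∀ j, a j = 0 ∨ (a j).totalDegree + (f j).totalDegree ≤ D) :
    homogeneousComponent D (∑ j, a j * f j) = ∑ j, homogeneousComponent (D - (f j).totalDegree)
      (a j) * homogeneousComponent (f j).totalDegree (f j) := by
  rw [map_sum]
  refine Finset.sum_congr rfl fun j _ => ?_
  rcases ha j with h0 | h0
  · simp [h0]
  · exact homogeneousComponent_mul_of_totalDegree_add_le h0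

theorem exists_lower_degree_combination (f : Fin c → MvPolynomial σ R)
    (hreg : IsWeaklyRegular (MvPolynomial σ R)
      (List.ofFn fun j => homogeneousComponent (f j).totalDegree (f j)))
    {D : ℕ} {a : Fin c → MvPolynomial σ R}
    (ha : ∀ j, a j = 0 ∨ (a j).totalDegree + (f j).totalDegree ≤ D)
    (htop : homogeneousComponent D (∑ j, a j * f j) = 0) :
    ∃ a' : Fin c → MvPolynomial σ R, ∑ j, a' j * f j = ∑ j, a j * f j ∧
      ∀ j, a' j = 0 ∨ (a' j).totalDegree + (f j).totalDegree < D := by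
  have hb0 : ∀ j, D < (f j).totalDegree →
      homogeneousComponent (D - (f j).totalDegree) (a j) = 0 := fun j hj => by
    rw [(ha j).resolve_right (by omega), map_zero]
  obtain ⟨h, hanti, hdiag, hhom, hzero, hbh⟩ := exists_homogeneous_alternating_of_sum_mul_eq_zero
    (fun j => homogeneousComponent_isHomogeneous _ _) hreg
    (fun j => homogeneousComponent_isHomogeneous _ _) hb0
    (by rw [← homogeneousComponent_sum_mul_of_totalDegree_add_le ha, htop])
  refine ⟨fun j => a j - ∑ i, h i j * f i, ?_, fun j => ?_⟩
  · simp only [sub_mul, Finset.sum_sub_distrib, Finset.sum_mul]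
    rw [Finset.sum_comm, Finset.sum_sum_mul_mul_eq_zero_of_alternating hanti hdiag, sub_zero]
  dsimp only
  by_cases hj : (f j).totalDegree ≤ D
  · have hh : ∀ i, h i j = 0 ∨
        (h i j).totalDegree + (f i).totalDegree ≤ D - (f j).totalDegree := fun i => by
      by_cases hij : (f i).totalDegree + (f j).totalDegree ≤ D
      · have := (hhom i j).totalDegree_le
        omega
      · exact Or.inl (hzero i j (by omega))
    have hdeg : (a j - ∑ i, h i j * f i).totalDegree ≤ D - (f j).totalDegree := by
      refine (totalDegree_sub _ _).trans (max_le ?_ (totalDegree_sum_mul_le hh))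
      rcases ha j with h0 | h0
      · simp [h0]
      · omega
    have htop' : homogeneousComponent (D - (f j).totalDegree) (a j - ∑ i, h i j * f i) = 0 := by
      rw [map_sub, homogeneousComponent_sum_mul_of_totalDegree_add_le hh, hbh j, sub_eq_zero]
      refine Finset.sum_congr rfl fun i _ => ?_
      rw [Nat.sub_right_comm, homogeneousComponent_eq_self (hhom i j)]
    rcases eq_zero_or_totalDegree_lt_of_homogeneousComponent_eq_zero hdeg htop' with h0 | hlt
    · exact Or.inl h0
    · exact Or.inr (by omega)
  · left
    rw [(ha j).resolve_right (by omega), Finset.sum_eq_zero fun i _ => by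
      rw [hzero i j (by omega), zero_mul], sub_zero]

theorem homogeneousComponent_totalDegree_mem_span_of_mem_span (f : Fin c → MvPolynomial σ R)
    (hreg : IsWeaklyRegular (MvPolynomial σ R)
      (List.ofFn fun j => homogeneousComponent (f j).totalDegree (f j)))
    {F : MvPolynomial σ R} (hF : F ∈ Ideal.span (Set.range f)) :
    homogeneousComponent F.totalDegree F ∈
      Ideal.span (Set.range fun j => homogeneousComponent (f j).totalDegree (f j)) := by
  obtain ⟨a, rfl⟩ := Ideal.mem_span_range_iff_exists_fun.mp hF
  suffices ∀ D (a : Fin c → MvPolynomial σ R),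
      (∀ j, a j = 0 ∨ (a j).totalDegree + (f j).totalDegree ≤ D) →
      homogeneousComponent (∑ j, a j * f j).totalDegree (∑ j, a j * f j) ∈
        Ideal.span (Set.range fun j => homogeneousComponent (f j).totalDegree (f j)) from
    this _ a fun j => Or.inr (Finset.le_sup (f := fun j => (a j).totalDegree + (f j).totalDegree)
      (Finset.mem_univ j))
  intro D
  induction D using Nat.strong_induction_on with | _ D ih => ?_
  intro a ha
  rcases (totalDegree_sum_mul_le ha).eq_or_lt with heq | hlt
  · rw [heq, homogeneousComponent_sum_mul_of_totalDegree_add_le ha]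
    exact Ideal.sum_mem _ fun j _ => Ideal.mul_mem_left _ _ (Ideal.subset_span ⟨j, rfl⟩)
  · obtain ⟨a', hsum, ha'⟩ :=
      exists_lower_degree_combination f hreg ha (homogeneousComponent_eq_zero _ _ hlt)
    rw [← hsum]
    exact ih (D - 1) (by omega) a' fun j => (ha' j).imp_right (by omega)

end MvPolynomial

theorem homogeneous_limit_of_complete_intersection_general {n c : ℕ}
    (f : Fin c → MvPolynomial (Fin n) ℂ)
    (hreg : RingTheory.Sequence.IsRegular (MvPolynomial (Fin n) ℂ)
      (List.ofFn fun j => initialForm (f j))) :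
    initialIdeal (Ideal.span (Set.range f)) =
      Ideal.span (Set.range fun j => initialForm (f j)) := by
  apply le_antisymm
  · rw [initialIdeal, Ideal.span_le]
    rintro _ ⟨F, hF, -, rfl⟩
    exact homogeneousComponent_totalDegree_mem_span_of_mem_span f hreg.toIsWeaklyRegular hF
  · rw [Ideal.span_le]
    rintro _ ⟨j, rfl⟩
    by_cases hj : f j = 0
    · simp [hj, initialForm]
    · exact Ideal.subset_span ⟨f j, Ideal.subset_span ⟨j, rfl⟩, hj, rfl⟩

/-- Let `Z ⊂ 𝔸ⁿ` be cut out by `f₁,…,f_c`, and suppose the projective closure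
`Z̄ ⊂ ℙⁿ` is a positive-dimensional complete intersection meeting the hyperplane
at infinity properly; algebraically this means that the top-degree forms
`in(f₁),…,in(f_c)` (whose common zero locus in the hyperplane at infinity is
`Z̄ ∩ H`) form a regular sequence.  Then the homogeneous limit `Z⁰ = V(ini(I_Z))`
of `Z` under the scaling action is the affine cone over `Z̄ ∩ H`: its ideal is
generated by the forms `in(f₁),…,in(f_c)`, and in particular `Z⁰` is a complete
intersection subscheme of `𝔸ⁿ` (cut out by the regular sequence of the
`in(fⱼ)`). -/
theorem homogeneous_limit_of_complete_intersection {n c : ℕ} (hc : c < n)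
    (f : Fin c → MvPolynomial (Fin n) ℂ)
    (hdeg : ∀ j, 0 < (f j).totalDegree)
    (hreg : RingTheory.Sequence.IsRegular (MvPolynomial (Fin n) ℂ)
      (List.ofFn fun j => initialForm (f j))) :
    initialIdeal (Ideal.span (Set.range f)) =
      Ideal.span (Set.range fun j => initialForm (f j)) :=
  homogeneous_limit_of_complete_intersection_general f hreg

end
end
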